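/- For every ℓ > 0 and every sufficiently large B ≥ ℓ⁴, there is a Knapsack instance with budget B, B^{1/4} large elements of size B^{3/4}, and B small elements of unit size, and n ≥ 4B^{1/4} ln(2B) agents of which a fraction α = 1/(4B^{1/4} ln(2B)) are special, such that the outcome maximizing the smooth Nash welfare Σ_i ln(ℓ + u_i(c)) selects only large elements, yet the special agents could deviate to the small elements and obtain scaled-down utility B^{3/4}/(4 ln(2B)) each, while getting only B^{1/4} in the chosen outcome. -/

import Mathlib

/-!
Take a single special agent and `n - 1 > 2 B^{1/4} ln(2B)` ordinary agents. Since
`ln y - ln x ≥ (y - x) / y`, an outcome missing a large element costs every ordinary agent at least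
`1 / (2 B^{1/4})` in `ln(ℓ + u)`, so the ordinary agents together lose more than `ln(2B)`, which
bounds anything the special agent can gain. Hence a smooth Nash maximizer takes all `B^{1/4}` large
elements, and these exhaust the budget.
-/

open Finset Real

lemma sum_sumElim_const {α β : Type*} (c : Finset (α ⊕ β)) (x y : ℝ) :
    ∑ e ∈ c, Sum.elim (fun _ => x) (fun _ => y) e = #c.toLeft * x + #c.toRight * y := by
  simp [sum_sum_eq_sum_toLeft_add_sum_toRight]

lemma sum_log_add_utility_of_one_special {α β : Type*} (ℓ : ℝ) (k : ℕ) (c : Finset (α ⊕ β)) :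
    ∑ i : Fin (k + 1), log (ℓ + ∑ e ∈ c,
        Sum.elim (fun _ => (1 : ℝ)) (fun _ => if (i : ℕ) < 1 then (1 : ℝ) else 0) e) =
      log (ℓ + (#c.toLeft + #c.toRight)) + k * log (ℓ + #c.toLeft) := by
  simp [Fin.sum_univ_succ, sum_sumElim_const]

lemma sub_div_le_log_sub_log {x y : ℝ} (hx : 0 < x) (hy : 0 < y) :
    (y - x) / y ≤ log y - log x := by
  have h := one_sub_inv_le_log_of_pos (div_pos hy hx)
  rw [log_div hy.ne' hx.ne', inv_div] at h
  rwa [sub_div, div_self hy.ne']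

lemma one_lt_mul_log_two_mul_pow_four {t : ℝ} (ht : 2 ≤ t) : 1 < t * log (2 * t ^ 4) := by
  have h2 : log 2 ≤ log (2 * t ^ 4) :=
    log_le_log two_pos (le_mul_of_one_le_right zero_le_two (one_le_pow₀ (by linarith)))
  nlinarith [log_two_gt_d9]

lemma exists_four_mul_le_succ_le_eight_mul {x : ℝ} (hx : 1 / 4 ≤ x) :
    ∃ k : ℕ, 4 * x ≤ k + 1 ∧ (k : ℝ) + 1 ≤ 8 * x := by
  obtain ⟨k, hk⟩ : ∃ k : ℕ, ⌈4 * x⌉₊ = k + 1 :=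
    Nat.exists_eq_add_one.mpr (Nat.ceil_pos.mpr (by linarith))
  refine ⟨k, by exact_mod_cast hk ▸ Nat.le_ceil _, ?_⟩
  have := Nat.ceil_lt_add_one (show 0 ≤ 4 * x by linarith)
  rw [hk] at this
  push_cast at this
  linarith

lemma log_add_mul_log_lt_of_missing_large {ℓ t a m k : ℝ} (hℓ : 0 < ℓ) (hℓt : ℓ ≤ t)
    (ha : 0 ≤ a) (hat : a + 1 ≤ t) (hm : 0 ≤ m) (hbudget : a * t ^ 3 + m ≤ t ^ 4)
    (hk : 2 * t * log (2 * t ^ 4) < k) :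
    log (ℓ + (a + m)) + k * log (ℓ + a) < (k + 1) * log (ℓ + t) := by
  have ht : 1 ≤ t := by linarith
  have hL : 0 < log (2 * t ^ 4) := log_pos (by nlinarith [one_le_pow₀ (n := 4) ht])
  have hk0 : 0 ≤ k := by nlinarith
  have hgap : 1 / (2 * t) ≤ log (ℓ + t) - log (ℓ + a) :=
    calc 1 / (2 * t) ≤ ((ℓ + t) - (ℓ + a)) / (ℓ + t) := by
          rw [div_le_div_iff₀ (by positivity) (by positivity)]; nlinarith
      _ ≤ log (ℓ + t) - log (ℓ + a) := sub_div_le_log_sub_log (by positivity) (by positivity)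
  have hspecial : log (ℓ + (a + m)) ≤ log (2 * t ^ 4) := by
    have : a ≤ a * t ^ 3 := le_mul_of_one_le_right ha (one_le_pow₀ ht)
    have : t ≤ t ^ 4 := le_self_pow₀ ht (by norm_num)
    exact log_le_log (by positivity) (by linarith)
  have hordinary : log (2 * t ^ 4) < k * (log (ℓ + t) - log (ℓ + a)) :=
    calc log (2 * t ^ 4) = 2 * t * log (2 * t ^ 4) * (1 / (2 * t)) := by field_simp
      _ < k * (1 / (2 * t)) := mul_lt_mul_of_pos_right hk (by positivity)
      _ ≤ k * (log (ℓ + t) - log (ℓ + a)) := mul_le_mul_of_nonneg_left hgap hk0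
  have := log_nonneg (show 1 ≤ ℓ + t by linarith)
  linarith

lemma card_toLeft_eq_and_toRight_eq_empty_of_welfare_le {ℓ : ℝ} {t m k : ℕ} (hℓ : 0 < ℓ)
    (hℓt : ℓ ≤ t) (hk : 2 * t * log (2 * (t : ℝ) ^ 4) < k) (c : Finset (Fin t ⊕ Fin m))
    (hbudget : (#c.toLeft : ℝ) * t ^ 3 + #c.toRight ≤ t ^ 4)
    (hmax : (k + 1) * log (ℓ + t) ≤
      log (ℓ + (#c.toLeft + #c.toRight)) + k * log (ℓ + #c.toLeft)) :
    #c.toLeft = t ∧ c.toRight = ∅ := by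
  have hle : #c.toLeft ≤ t := by simpa using card_le_univ c.toLeft
  have heq : #c.toLeft = t := by
    refine hle.eq_or_lt.resolve_right fun hlt => hmax.not_gt ?_
    exact log_add_mul_log_lt_of_missing_large hℓ hℓt (Nat.cast_nonneg _)
      (by exact_mod_cast hlt) (Nat.cast_nonneg _) hbudget hk
  refine ⟨heq, card_eq_zero.mp ?_⟩
  rw [heq] at hbudget
  exact Nat.eq_zero_of_le_zero (by exact_mod_cast (show (#c.toRight : ℝ) ≤ 0 by linarith))

/-- Lower bound for smooth Nash welfare on Knapsack instances.  For every smoothing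
`ℓ > 0` and all sufficiently large `B = t⁴ ≥ ℓ⁴`, consider the Knapsack instance with
budget `B`, `B^{1/4} = t` large elements (`Sum.inl`) of size `B^{3/4} = t³`, and
`B = t⁴` small elements (`Sum.inr`) of unit size.  There are `n ≥ 4B^{1/4}·ln(2B)`
agents, of which the first `s` are special with `s/n ≈ 1/(4B^{1/4}·ln(2B))`; all agents
value each large element at `1`, and special agents additionally value each small
element at `1`.  Then every feasible outcome maximizing the smooth Nash welfare
`∑ i, ln(ℓ + u_i(c))` selects only large elements, giving each special agent utility
`B^{1/4} = t`, while deviating to all the small elements would give the special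
coalition scaled-down utility `(s/n)·B ≥ B^{3/4}/(8·ln(2B))` each. -/
theorem smooth_nash_knapsack_lower_bound :
    ∀ ℓ : ℝ, 0 < ℓ →
    ∃ t₀ : ℕ, ∀ t : ℕ, t₀ ≤ t → ℓ ≤ (t : ℝ) →
    ∃ n s : ℕ, 0 < n ∧ 1 ≤ s ∧
      (4 * (t : ℝ) * Real.log (2 * (t : ℝ)^4) ≤ (n : ℝ)) ∧
      ((s : ℝ) / n ≤ 1 / (4 * (t : ℝ) * Real.log (2 * (t : ℝ)^4))) ∧
      (1 / (8 * (t : ℝ) * Real.log (2 * (t : ℝ)^4)) ≤ (s : ℝ) / n) ∧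
      (∀ c : Finset (Fin t ⊕ Fin (t^4)),
        -- feasibility: total size within the budget B = t⁴
        (∑ e ∈ c, (Sum.elim (fun _ => (t : ℝ)^3) (fun _ => (1 : ℝ)) e)) ≤ (t : ℝ)^4 →
        -- c maximizes the smooth Nash welfare over feasible outcomes
        (∀ c' : Finset (Fin t ⊕ Fin (t^4)),
          (∑ e ∈ c', (Sum.elim (fun _ => (t : ℝ)^3) (fun _ => (1 : ℝ)) e)) ≤ (t : ℝ)^4 →
          (∑ i : Fin n, Real.log (ℓ + ∑ e ∈ c',
              (Sum.elim (fun _ => (1 : ℝ))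
                (fun _ => if (i : ℕ) < s then (1 : ℝ) else 0) e))) ≤
          (∑ i : Fin n, Real.log (ℓ + ∑ e ∈ c,
              (Sum.elim (fun _ => (1 : ℝ))
                (fun _ => if (i : ℕ) < s then (1 : ℝ) else 0) e)))) →
        -- conclusion: only large elements are selected,
        (∀ e ∈ c, e.isLeft = true) ∧
        -- each special agent gets utility exactly B^{1/4} = t,
        (∀ i : Fin n, (i : ℕ) < s →
          (∑ e ∈ c, (Sum.elim (fun _ => (1 : ℝ))
              (fun _ => if (i : ℕ) < s then (1 : ℝ) else 0) e)) = (t : ℝ)) ∧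
        -- while deviating to all small elements gives scaled utility ≥ B^{3/4}/(8 ln 2B)
        ((s : ℝ) / n * (t : ℝ)^4 ≥ (t : ℝ)^3 / (8 * Real.log (2 * (t : ℝ)^4)))) := by
  intro ℓ hℓ
  refine ⟨2, fun t ht hℓt => ?_⟩
  have ht2 : (2 : ℝ) ≤ t := by exact_mod_cast ht
  set L := log (2 * (t : ℝ) ^ 4)
  have htL : 1 < t * L := one_lt_mul_log_two_mul_pow_four ht2
  obtain ⟨k, hn_ge, hn_le⟩ := exists_four_mul_le_succ_le_eight_mul (x := t * L) (by linarith)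
  rw [← mul_assoc] at hn_ge hn_le
  refine ⟨k + 1, 1, k.succ_pos, le_rfl, by push_cast; linarith, ?_, ?_, fun c hc hmax => ?_⟩
  · push_cast
    exact one_div_le_one_div_of_le (by linarith) hn_ge
  · push_cast
    exact one_div_le_one_div_of_le (by linarith) hn_le
  rw [sum_sumElim_const, mul_one] at hc
  have hall := hmax ((univ : Finset (Fin t)).disjSum ∅) (by simp [← pow_succ'])
  simp only [sum_log_add_utility_of_one_special, toLeft_disjSum, toRight_disjSum, card_univ,
    Fintype.card_fin, card_empty, Nat.cast_zero, add_zero] at hall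
  obtain ⟨hleft, hright⟩ := card_toLeft_eq_and_toRight_eq_empty_of_welfare_le (k := k) hℓ hℓt
    (by linarith) c hc (by linarith)
  refine ⟨fun e he => ?_, fun i hi => ?_, ?_⟩
  · cases e with
    | inl => rfl
    | inr b => simpa [hright] using mem_toRight.mpr he
  · simp [sum_sumElim_const, hleft, hright]
  · have hL : 0 < L := pos_of_mul_pos_right (a := (t : ℝ)) (by linarith) (by positivity)
    calc (t : ℝ) ^ 3 / (8 * L) = 1 / (8 * t * L) * t ^ 4 := by field_simp
      _ ≤ ((1 : ℕ) : ℝ) / ((k + 1 : ℕ) : ℝ) * t ^ 4 := by push_cast; gcongr
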